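/- (Theorem 2, iteration-count bound.) Let E be a real inner product space, L > 0, a > 1, c > 0, ε > 0, and f : E → ℝ a differentiable function whose gradient ∇f is Lipschitz with constant L and which satisfies f(x) ≥ f* for all x. Let θ : ℕ → E and g : ℕ → E satisfy, for all t < T: g t ≠ 0, ‖∇f(θ t)‖ ≥ ε, ⟪∇f(θ t), g t⟫² ≥ c · ‖∇f(θ t)‖² · ‖g t‖² (the squared cosine of the angle between ∇f(θ t) and g t is at least c), and f(θ (t+1)) ≤ min (f(θ t - α t • g t)) (f(θ t + α t • g t)) where α t = 2·|⟪∇f(θ t), g t⟫| / (a·L·‖g t‖²). Then (T : ℝ) ≤ a·L·(f(θ 0) - f*) / (2·(1 - 1/a)·ε²·c). -/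

import Mathlib

open scoped InnerProductSpace

lemma descent_lemma {E : Type*} [NormedAddCommGroup E] [InnerProductSpace ℝ E] [CompleteSpace E]
    (L : NNReal) (f : E → ℝ) (gradf : E → E)
    (hf : ∀ x, HasGradientAt f (gradf x) x) (hLip : LipschitzWith L gradf) (x y : E) :
    f y ≤ f x + ⟪gradf x, y - x⟫_ℝ + (L : ℝ) / 2 * ‖y - x‖ ^ 2 := by
  set h : ℝ → ℝ := fun t => f (x + t • (y - x)) - t * ⟪gradf x, y - x⟫_ℝ
      - t ^ 2 * ((L : ℝ) / 2 * ‖y - x‖ ^ 2) with hh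
  have hderiv : ∀ t : ℝ, HasDerivAt h
      (⟪gradf (x + t • (y - x)), y - x⟫_ℝ - ⟪gradf x, y - x⟫_ℝ
        - 2 * t * ((L : ℝ) / 2 * ‖y - x‖ ^ 2)) t := by
    intro t
    have hpath : HasDerivAt (fun t : ℝ => x + t • (y - x)) (y - x) t := by
      simpa using ((hasDerivAt_id t).smul_const (y - x)).const_add x
    have hfz := (hf (x + t • (y - x))).hasFDerivAt
    have hc := hfz.comp_hasDerivAt t hpath
    simp only [InnerProductSpace.toDual_apply_apply] at hc
    have h1 : HasDerivAt (fun t : ℝ => t * ⟪gradf x, y - x⟫_ℝ) ⟪gradf x, y - x⟫_ℝ t := by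
      simpa using (hasDerivAt_id t).mul_const _
    have h2 : HasDerivAt (fun t : ℝ => t ^ 2 * ((L : ℝ) / 2 * ‖y - x‖ ^ 2))
        (2 * t * ((L : ℝ) / 2 * ‖y - x‖ ^ 2)) t := by
      simpa using (hasDerivAt_pow 2 t).mul_const ((L : ℝ) / 2 * ‖y - x‖ ^ 2)
    exact (hc.sub h1).sub h2
  have hmono : AntitoneOn h (Set.Icc (0:ℝ) 1) := by
    apply antitoneOn_of_deriv_nonpos (convex_Icc 0 1)
    · exact Continuous.continuousOn (by
        have : Differentiable ℝ h := fun t => (hderiv t).differentiableAt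
        exact this.continuous)
    · exact fun t _ => ((hderiv t).differentiableAt).differentiableWithinAt
    · intro t ht
      rw [interior_Icc] at ht
      rw [(hderiv t).deriv]
      have hbound : ⟪gradf (x + t • (y - x)) - gradf x, y - x⟫_ℝ
          ≤ (L : ℝ) * t * ‖y - x‖ ^ 2 := by
        calc ⟪gradf (x + t • (y - x)) - gradf x, y - x⟫_ℝ
            ≤ ‖gradf (x + t • (y - x)) - gradf x‖ * ‖y - x‖ := real_inner_le_norm _ _
          _ ≤ ((L : ℝ) * ‖(x + t • (y - x)) - x‖) * ‖y - x‖ := by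
              gcongr
              simpa [dist_eq_norm] using hLip.dist_le_mul (x + t • (y - x)) x
          _ = (L : ℝ) * t * ‖y - x‖ ^ 2 := by
              rw [add_sub_cancel_left, norm_smul, Real.norm_eq_abs,
                abs_of_pos ht.1]; ring
      have := inner_sub_left (𝕜 := ℝ) (gradf (x + t • (y - x))) (gradf x) (y - x)
      nlinarith [this]
  have h10 : h 1 ≤ h 0 := hmono (Set.mem_Icc.2 ⟨le_refl 0, zero_le_one⟩)
    (Set.mem_Icc.2 ⟨zero_le_one, le_refl 1⟩) zero_le_one
  simp only [hh, one_smul, one_pow, one_mul, zero_smul, add_zero, zero_pow, zero_mul,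
    sub_zero, add_sub_cancel] at h10
  linarith

/-- Theorem 2 (iteration-count bound): if for all `t < T` the gradient norm is at least `ε`,
the squared cosine of the angle between `∇f(θ t)` and `g t` is at least `c`, and the objective
decreases at least as much as the best of `θ t ± α t • g t` with
`α t = 2|⟪∇f(θ t), g t⟫| / (a·L·‖g t‖²)`, then `T ≤ a·L·(f(θ 0) - f*) / (2·(1 - 1/a)·ε²·c)`. -/
theorem iteration_count_bound
    {E : Type*} [NormedAddCommGroup E] [InnerProductSpace ℝ E] [CompleteSpace E]
    (L : NNReal) (hL : 0 < L) (a : ℝ) (ha : 1 < a) (c : ℝ) (hc : 0 < c) (ε : ℝ) (hε : 0 < ε)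
    (f : E → ℝ) (gradf : E → E)
    (hf : ∀ x, HasGradientAt f (gradf x) x)
    (hLip : LipschitzWith L gradf)
    (fstar : ℝ) (hfstar : ∀ x, fstar ≤ f x)
    (T : ℕ) (θ : ℕ → E) (g : ℕ → E) (α : ℕ → ℝ)
    (hα : ∀ t, α t = 2 * |⟪gradf (θ t), g t⟫_ℝ| / (a * (L : ℝ) * ‖g t‖ ^ 2))
    (hg : ∀ t < T, g t ≠ 0)
    (hgrad : ∀ t < T, ε ≤ ‖gradf (θ t)‖)
    (hcos : ∀ t < T, c * ‖gradf (θ t)‖ ^ 2 * ‖g t‖ ^ 2 ≤ ⟪gradf (θ t), g t⟫_ℝ ^ 2)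
    (hstep : ∀ t < T, f (θ (t + 1)) ≤ min (f (θ t - α t • g t)) (f (θ t + α t • g t))) :
    (T : ℝ) ≤ a * (L : ℝ) * (f (θ 0) - fstar) / (2 * (1 - 1 / a) * ε ^ 2 * c) := by
  have hL' : (0:ℝ) < L := hL
  have ha0 : (0:ℝ) < a := lt_trans one_pos ha
  have hinv : 0 < 1 - 1 / a := by
    rw [sub_pos, div_lt_one ha0]; exact ha
  set D : ℝ := 2 * (1 - 1 / a) * ε ^ 2 * c / (a * (L : ℝ)) with hD
  have hDpos : 0 < D := by positivity
  have key : ∀ t < T, f (θ (t + 1)) + D ≤ f (θ t) := by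
    intro t ht
    set ip : ℝ := ⟪gradf (θ t), g t⟫_ℝ with hip
    set n : ℝ := ‖g t‖ with hn
    have hn0 : 0 < n := norm_pos_iff.2 (hg t ht)
    have hip2 : c * ε ^ 2 * n ^ 2 ≤ ip ^ 2 := by
      have h1 := hcos t ht
      have h2 : c * ε ^ 2 * n ^ 2 ≤ c * ‖gradf (θ t)‖ ^ 2 * n ^ 2 := by
        gcongr
        exact hgrad t ht
      linarith
    have hαt : α t = 2 * |ip| / (a * (L : ℝ) * n ^ 2) := hα t
    have hα0 : 0 ≤ α t := by rw [hαt]; positivity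
    -- choose the good direction
    set β : ℝ := if 0 ≤ ip then α t else -(α t) with hβ
    have habs : |β| = α t := by
      rw [hβ]; split_ifs with h
      · exact abs_of_nonneg hα0
      · rw [abs_neg]; exact abs_of_nonneg hα0
    have hinner : ⟪gradf (θ t), (θ t - β • g t) - θ t⟫_ℝ = -(α t * |ip|) := by
      have heq : (θ t - β • g t) - θ t = (-β) • g t := by
        rw [neg_smul]; abel
      have h1 : ⟪gradf (θ t), (θ t - β • g t) - θ t⟫_ℝ = -β * ip := by
        rw [heq, real_inner_smul_right, ← hip]; try ring
      rcases le_or_gt 0 ip with h | h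
      · have hb : β = α t := if_pos h
        rw [h1, hb, abs_of_nonneg h]; try ring
      · have hb : β = -(α t) := if_neg (not_le.2 h)
        rw [h1, hb, abs_of_neg h]; try ring
    have hnorm : ‖(θ t - β • g t) - θ t‖ ^ 2 = (α t) ^ 2 * n ^ 2 := by
      have : (θ t - β • g t) - θ t = (-β) • g t := by
        rw [neg_smul]; abel
      rw [this, norm_smul, Real.norm_eq_abs, abs_neg, habs, mul_pow, hn]
    have hdesc := descent_lemma L f gradf hf hLip (θ t) (θ t - β • g t)
    rw [hinner, hnorm] at hdesc
    have hstep' : f (θ (t + 1)) ≤ f (θ t - β • g t) := by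
      rcases le_or_gt 0 ip with h | h
      · have : β = α t := if_pos h
        rw [this]
        exact (hstep t ht).trans (min_le_left _ _)
      · have : β = -(α t) := if_neg (not_le.2 h)
        rw [this]
        have : θ t - (-(α t)) • g t = θ t + α t • g t := by
          rw [neg_smul]; abel
        rw [this]
        exact (hstep t ht).trans (min_le_right _ _)
    -- key algebraic inequality
    have halg : D ≤ α t * |ip| - (L : ℝ) / 2 * ((α t) ^ 2 * n ^ 2) := by
      have hRHS : α t * |ip| - (L : ℝ) / 2 * ((α t) ^ 2 * n ^ 2)
          = 2 * (1 - 1 / a) * ip ^ 2 / (a * (L : ℝ) * n ^ 2) := by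
        rw [hαt, ← sq_abs ip]
        field_simp
      rw [hRHS, hD, div_le_div_iff₀ (by positivity) (by positivity)]
      nlinarith [mul_le_mul_of_nonneg_left hip2 (le_of_lt hinv),
        mul_pos hL' (mul_pos ha0 hinv)]
    linarith
  have hiter : ∀ t ≤ T, f (θ t) + t * D ≤ f (θ 0) := by
    intro t
    induction t with
    | zero => intro _; simp
    | succ k ih =>
      intro hk
      have hkT : k < T := hk
      have h1 := key k hkT
      have h2 := ih (le_of_lt hkT)
      push_cast
      linarith
  have hfinal : (T : ℝ) * D ≤ f (θ 0) - fstar := by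
    have := hiter T le_rfl
    have := hfstar (θ T)
    linarith
  rw [le_div_iff₀ (by positivity : (0:ℝ) < 2 * (1 - 1 / a) * ε ^ 2 * c)]
  have hDeq : D * (a * (L : ℝ)) = 2 * (1 - 1 / a) * ε ^ 2 * c := by
    rw [hD]; field_simp
  calc (T : ℝ) * (2 * (1 - 1 / a) * ε ^ 2 * c) = (T : ℝ) * D * (a * (L : ℝ)) := by
        rw [← hDeq]; ring
    _ ≤ (f (θ 0) - fstar) * (a * (L : ℝ)) := by
        apply mul_le_mul_of_nonneg_right hfinal (by positivity)
    _ = a * (L : ℝ) * (f (θ 0) - fstar) := by ring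
  done
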